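/- arXiv:0907.3288 — 4 statements merged into one kernel-verified Lean document; each statement's English description precedes it below -/
import Mathlib

section
/- Let F(x,y) = a x^3 + b x^2 y + c x y^2 + d y^3 with discriminant D, Hessian H(x,y) = -(1/4)(F_xx F_yy - F_xy^2), and cubic covariant G(x,y) = F_x H_y - F_y H_x. Then for all x, y: 4 H(x,y)^3 = G(x,y)^2 + 27 D F(x,y)^2. -/
private lemma deriv_cubic' (p q r s x : ℝ) :
    deriv (fun u : ℝ => p * u ^ 3 + q * u ^ 2 + r * u + s) x
      = 3 * p * x ^ 2 + 2 * q * x + r := by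
  have h : HasDerivAt (fun u : ℝ => p * u ^ 3 + q * u ^ 2 + r * u + s)
      (p * (3 * x ^ 2) + q * (2 * x ^ 1) + r * 1 + 0) x := by
    exact ((((hasDerivAt_pow 3 x).const_mul p).add
      ((hasDerivAt_pow 2 x).const_mul q)).add
      ((hasDerivAt_id x).const_mul r)).add (hasDerivAt_const x s)
  rw [h.deriv]; ring

private lemma deriv_quad' (p q r x : ℝ) :
    deriv (fun u : ℝ => p * u ^ 2 + q * u + r) x = 2 * p * x + q := by
  have h : HasDerivAt (fun u : ℝ => p * u ^ 2 + q * u + r)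
      (p * (2 * x ^ 1) + q * 1 + 0) x := by
    exact (((hasDerivAt_pow 2 x).const_mul p).add
      ((hasDerivAt_id x).const_mul q)).add (hasDerivAt_const x r)
  rw [h.deriv]; ring

/-- For a binary cubic form `F` with Hessian `H = -(1/4)(F_xx F_yy - F_xy^2)` and cubic
covariant `G = F_x H_y - F_y H_x`, one has `4 H^3 = G^2 + 27 D F^2`. -/
theorem cubic_covariant_syzygy (a b c d D : ℝ)
    (hD : D = 18 * a * b * c * d + b ^ 2 * c ^ 2 - 27 * a ^ 2 * d ^ 2
        - 4 * a * c ^ 3 - 4 * b ^ 3 * d)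
    (F H G : ℝ → ℝ → ℝ)
    (hF : ∀ x y, F x y = a * x ^ 3 + b * x ^ 2 * y + c * x * y ^ 2 + d * y ^ 3)
    (hH : ∀ x y, H x y = -(1 / 4) *
        ((deriv (fun u => deriv (fun v => F v y) u) x) *
          (deriv (fun u => deriv (fun v => F x v) u) y) -
          (deriv (fun v => deriv (fun u => F u v) x) y) ^ 2))
    (hG : ∀ x y, G x y = (deriv (fun u => F u y) x) * (deriv (fun v => H x v) y)
        - (deriv (fun v => F x v) y) * (deriv (fun u => H u y) x)) :
    ∀ x y : ℝ, 4 * (H x y) ^ 3 = (G x y) ^ 2 + 27 * D * (F x y) ^ 2 := by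
  have hFx : ∀ x y : ℝ, deriv (fun u => F u y) x
      = 3 * a * x ^ 2 + 2 * b * x * y + c * y ^ 2 := by
    intro x y
    have he : (fun u => F u y)
        = fun u : ℝ => a * u ^ 3 + (b * y) * u ^ 2 + (c * y ^ 2) * u + d * y ^ 3 := by
      funext u; rw [hF]; ring
    rw [he, deriv_cubic']; ring
  have hFy : ∀ x y : ℝ, deriv (fun v => F x v) y
      = b * x ^ 2 + 2 * c * x * y + 3 * d * y ^ 2 := by
    intro x y
    have he : (fun v => F x v)
        = fun v : ℝ => d * v ^ 3 + (c * x) * v ^ 2 + (b * x ^ 2) * v + a * x ^ 3 := by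
      funext v; rw [hF]; ring
    rw [he, deriv_cubic']; ring
  have hFxx : ∀ x y : ℝ, deriv (fun u => deriv (fun v => F v y) u) x
      = 6 * a * x + 2 * b * y := by
    intro x y
    have he : (fun u => deriv (fun v => F v y) u)
        = fun u : ℝ => (3 * a) * u ^ 2 + (2 * b * y) * u + c * y ^ 2 := by
      funext u; rw [hFx u y]; ring
    rw [he, deriv_quad']; ring
  have hFyy : ∀ x y : ℝ, deriv (fun u => deriv (fun v => F x v) u) y
      = 2 * c * x + 6 * d * y := by
    intro x y
    have he : (fun u => deriv (fun v => F x v) u)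
        = fun u : ℝ => (3 * d) * u ^ 2 + (2 * c * x) * u + b * x ^ 2 := by
      funext u; rw [hFy x u]; ring
    rw [he, deriv_quad']; ring
  have hFxy : ∀ x y : ℝ, deriv (fun v => deriv (fun u => F u v) x) y
      = 2 * b * x + 2 * c * y := by
    intro x y
    have he : (fun v => deriv (fun u => F u v) x)
        = fun v : ℝ => c * v ^ 2 + (2 * b * x) * v + 3 * a * x ^ 2 := by
      funext v; rw [hFx x v]; ring
    rw [he, deriv_quad']; ring
  have hH' : ∀ x y : ℝ, H x y
      = (b ^ 2 - 3 * a * c) * x ^ 2 + (b * c - 9 * a * d) * x * y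
        + (c ^ 2 - 3 * b * d) * y ^ 2 := by
    intro x y
    rw [hH, hFxx, hFyy, hFxy]; ring
  have hHx : ∀ x y : ℝ, deriv (fun u => H u y) x
      = 2 * (b ^ 2 - 3 * a * c) * x + (b * c - 9 * a * d) * y := by
    intro x y
    have he : (fun u => H u y)
        = fun u : ℝ => (b ^ 2 - 3 * a * c) * u ^ 2 + ((b * c - 9 * a * d) * y) * u
          + (c ^ 2 - 3 * b * d) * y ^ 2 := by
      funext u; rw [hH']; ring
    rw [he, deriv_quad']
  have hHy : ∀ x y : ℝ, deriv (fun v => H x v) y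
      = (b * c - 9 * a * d) * x + 2 * (c ^ 2 - 3 * b * d) * y := by
    intro x y
    have he : (fun v => H x v)
        = fun v : ℝ => (c ^ 2 - 3 * b * d) * v ^ 2 + ((b * c - 9 * a * d) * x) * v
          + (b ^ 2 - 3 * a * c) * x ^ 2 := by
      funext v; rw [hH']; ring
    rw [he, deriv_quad']; ring
  intro x y
  rw [hG, hFx, hFy, hHx, hHy, hH', hF, hD]
  ring
end

section
/- Let F be an irreducible binary cubic form with integer coefficients and positive discriminant D whose Hessian H(x,y) = A x^2 + B x y + C y^2 satisfies C ≥ A ≥ |B| (i.e., F is reduced). Then for every integer solution (x,y) of F(x,y) = 1 with y ≠ 0, one has H(x,y) ≥ (1/2)√(3D). -/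
open Polynomial

/-- If `F` is an irreducible reduced binary cubic form with positive discriminant `D`,
then every integer solution of `F(x,y) = 1` with `y ≠ 0` satisfies
`H(x,y) ≥ (1/2)√(3D)` where `H` is the Hessian of `F`. -/
theorem hessian_lower_bound (a b c d : ℤ) (D : ℤ)
    (hD : D = 18 * a * b * c * d + b ^ 2 * c ^ 2 - 27 * a ^ 2 * d ^ 2
        - 4 * a * c ^ 3 - 4 * b ^ 3 * d)
    (hDpos : 0 < D)
    (hirr : Irreducible (C (a : ℚ) * X ^ 3 + C (b : ℚ) * X ^ 2 + C (c : ℚ) * X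
        + C (d : ℚ)))
    (A B C' : ℤ)
    (hA : A = b ^ 2 - 3 * a * c) (hB : B = b * c - 9 * a * d)
    (hC : C' = c ^ 2 - 3 * b * d)
    (hred : C' ≥ A ∧ A ≥ |B|) :
    ∀ x y : ℤ, a * x ^ 3 + b * x ^ 2 * y + c * x * y ^ 2 + d * y ^ 3 = 1 → y ≠ 0 →
      ((A * x ^ 2 + B * x * y + C' * y ^ 2 : ℤ) : ℝ)
        ≥ (1 / 2) * Real.sqrt (3 * (D : ℝ)) := by
  intro x y _ hy
  obtain ⟨hCA, hAB⟩ := hred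
  have hdisc : B ^ 2 - 4 * A * C' = -3 * D := by subst hA hB hC hD; ring
  have hApos : 0 < A := by
    rcases lt_or_ge 0 A with h | h
    · exact h
    · have hA0 : A = 0 := le_antisymm h (le_trans (abs_nonneg B) hAB)
      have hB0 : B = 0 := by
        rw [hA0] at hAB
        exact abs_eq_zero.mp (le_antisymm hAB (abs_nonneg B))
      rw [hA0, hB0] at hdisc
      simp at hdisc
      omega
  have hy2 : 1 ≤ y ^ 2 := by
    have h0 : 0 < y ^ 2 := pow_two_pos_of_ne_zero hy
    omega
  set H : ℤ := A * x ^ 2 + B * x * y + C' * y ^ 2 with hHdef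
  have hkey : 4 * A * H = (2 * A * x + B * y) ^ 2 + 3 * D * y ^ 2 := by
    rw [hHdef]; linear_combination (-(y ^ 2)) * hdisc
  have hAH : 3 * D ≤ 4 * A * H := by nlinarith [sq_nonneg (2 * A * x + B * y)]
  -- `1 ≤ x^2 - |x*y| + y^2`
  have ht : 1 ≤ x ^ 2 - |x * y| + y ^ 2 := by
    rcases eq_or_ne x 0 with rfl | hx
    · simpa using hy2
    · have habs : 1 ≤ |x * y| := Int.one_le_abs (mul_ne_zero hx hy)
      nlinarith [sq_nonneg (|x| - |y|), sq_abs x, sq_abs y, abs_mul x y]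
  have hBxy : -(A * |x * y|) ≤ B * (x * y) := by
    have h1 : -(|B| * |x * y|) ≤ B * (x * y) := by
      rw [← abs_mul]; exact neg_abs_le _
    have h2 : |B| * |x * y| ≤ A * |x * y| :=
      mul_le_mul_of_nonneg_right hAB (abs_nonneg _)
    linarith
  have hHA : A ≤ H := by
    have h3 : 0 ≤ A * (x ^ 2 - |x * y| + y ^ 2 - 1) := by
      apply mul_nonneg hApos.le; linarith
    have h4 : 0 ≤ (C' - A) * y ^ 2 := mul_nonneg (by linarith) (sq_nonneg y)
    nlinarith
  have hHpos : 0 < H := lt_of_lt_of_le hApos hHA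
  have hsq : 3 * D ≤ (2 * H) ^ 2 := by
    nlinarith [mul_le_mul_of_nonneg_right hHA hHpos.le]
  have hR : Real.sqrt (3 * (D : ℝ)) ≤ 2 * (H : ℝ) := by
    have h1 : (3 * (D : ℝ)) ≤ (2 * (H : ℝ)) ^ 2 := by exact_mod_cast hsq
    calc Real.sqrt (3 * (D : ℝ)) ≤ Real.sqrt ((2 * (H : ℝ)) ^ 2) := Real.sqrt_le_sqrt h1
      _ = 2 * (H : ℝ) := Real.sqrt_sq (by positivity)
  have hHR : (0 : ℝ) ≤ (H : ℝ) := by exact_mod_cast hHpos.le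
  linarith [hR]
end

section
/- Let g(t) = √2 · arcsinh(exp(-√6 t / 2)/2) and let a be a real number with a ≤ √6/√5. Then the function t ↦ g(t) · exp(a t) is (weakly) decreasing on (0,∞). -/
open Real Set

lemma arsinh_le_self' {x : ℝ} (hx : 0 ≤ x) : Real.arsinh x ≤ x := by
  rcases hx.eq_or_lt with h | h
  · simp [← h]
  · have h1 : Real.sinh (Real.arsinh x) < Real.sinh x := by
      rw [Real.sinh_arsinh]
      exact Real.self_lt_sinh_iff.mpr h
    exact (Real.sinh_lt_sinh.mp h1).le

/-- For `a ≤ √6/√5`, the function `t ↦ g(t)·exp(a t)` with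
`g(t) = √2 · arcsinh(exp(-√6 t/2)/2)` is (weakly) decreasing on `(0,∞)`. -/
theorem g_mul_exp_antitone (a : ℝ) (ha : a ≤ Real.sqrt 6 / Real.sqrt 5) :
    AntitoneOn
      (fun t : ℝ =>
        Real.sqrt 2 * Real.arsinh (Real.exp (-Real.sqrt 6 * t / 2) / 2) *
          Real.exp (a * t))
      (Set.Ioi 0) := by
  have h6 : (0:ℝ) < Real.sqrt 6 := by positivity
  have h5 : (0:ℝ) < Real.sqrt 5 := by positivity
  have h2 : (0:ℝ) < Real.sqrt 2 := by positivity
  -- derivative at each point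
  have hD : ∀ t : ℝ, HasDerivAt
      (fun t : ℝ =>
        Real.sqrt 2 * Real.arsinh (Real.exp (-Real.sqrt 6 * t / 2) / 2) *
          Real.exp (a * t))
      ((Real.sqrt 2 * ((Real.sqrt (1 + (Real.exp (-Real.sqrt 6 * t / 2) / 2) ^ 2))⁻¹
          * (Real.exp (-Real.sqrt 6 * t / 2) * (-Real.sqrt 6 / 2) / 2))) * Real.exp (a * t)
        + (Real.sqrt 2 * Real.arsinh (Real.exp (-Real.sqrt 6 * t / 2) / 2))
          * (Real.exp (a * t) * a)) t := by
    intro t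
    have h1 : HasDerivAt (fun t : ℝ => -Real.sqrt 6 * t / 2) (-Real.sqrt 6 / 2) t := by
      simpa using ((hasDerivAt_id t).const_mul (-Real.sqrt 6)).div_const 2
    have h2' : HasDerivAt (fun t : ℝ => Real.exp (-Real.sqrt 6 * t / 2) / 2)
        (Real.exp (-Real.sqrt 6 * t / 2) * (-Real.sqrt 6 / 2) / 2) t := (h1.exp).div_const 2
    have h3 : HasDerivAt (fun t : ℝ => Real.arsinh (Real.exp (-Real.sqrt 6 * t / 2) / 2))
        ((Real.sqrt (1 + (Real.exp (-Real.sqrt 6 * t / 2) / 2) ^ 2))⁻¹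
          * (Real.exp (-Real.sqrt 6 * t / 2) * (-Real.sqrt 6 / 2) / 2)) t :=
      (Real.hasDerivAt_arsinh _).comp t h2'
    have h4 : HasDerivAt (fun t : ℝ =>
        Real.sqrt 2 * Real.arsinh (Real.exp (-Real.sqrt 6 * t / 2) / 2))
        (Real.sqrt 2 * ((Real.sqrt (1 + (Real.exp (-Real.sqrt 6 * t / 2) / 2) ^ 2))⁻¹
          * (Real.exp (-Real.sqrt 6 * t / 2) * (-Real.sqrt 6 / 2) / 2))) t := h3.const_mul _
    have h5' : HasDerivAt (fun t : ℝ => Real.exp (a * t)) (Real.exp (a * t) * a) t := by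
      simpa using ((hasDerivAt_id t).const_mul a).exp
    exact h4.mul h5'
  apply antitoneOn_of_deriv_nonpos (convex_Ioi 0)
  · refine Continuous.continuousOn ?_
    exact ((continuous_const.mul (Real.continuous_arsinh.comp
      (((Real.continuous_exp.comp (by continuity)).div_const 2)))).mul
      (Real.continuous_exp.comp (by continuity)))
  · intro t ht
    exact (hD t).differentiableAt.differentiableWithinAt
  · intro t ht
    rw [interior_Ioi] at ht
    rw [(hD t).deriv]
    set u : ℝ := Real.exp (-Real.sqrt 6 * t / 2) / 2 with hu
    have hupos : 0 < u := by positivity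
    have hule : u ≤ 1 / 2 := by
      have : Real.exp (-Real.sqrt 6 * t / 2) ≤ 1 := by
        rw [Real.exp_le_one_iff]
        have := mul_pos h6 ht
        nlinarith
      rw [hu]; linarith
    set s : ℝ := Real.sqrt (1 + u ^ 2) with hs
    have hspos : 0 < s := by positivity
    have hssq : s ^ 2 = 1 + u ^ 2 := Real.sq_sqrt (by positivity)
    have hsle : s ≤ Real.sqrt 5 / 2 := by
      rw [hs]
      have : (1 : ℝ) + u ^ 2 ≤ 5 / 4 := by nlinarith
      have h55 : Real.sqrt 5 ^ 2 = 5 := Real.sq_sqrt (by norm_num)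
      calc Real.sqrt (1 + u ^ 2) ≤ Real.sqrt ((Real.sqrt 5 / 2) ^ 2) :=
            Real.sqrt_le_sqrt (by nlinarith)
        _ = Real.sqrt 5 / 2 := Real.sqrt_sq (by positivity)
    have key : a * Real.arsinh u * s ≤ Real.sqrt 6 / 2 * u := by
      rcases le_or_gt a 0 with hneg | hpos
      · have h1 : a * Real.arsinh u ≤ 0 :=
          mul_nonpos_of_nonpos_of_nonneg hneg (by
            rw [← Real.arsinh_zero]; exact Real.arsinh_le_arsinh.mpr hupos.le)
        nlinarith
      · have har : Real.arsinh u ≤ u := arsinh_le_self' hupos.le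
        have h55 : Real.sqrt 5 * Real.sqrt 5 = 5 := Real.mul_self_sqrt (by norm_num)
        calc a * Real.arsinh u * s ≤ a * u * s := by
              have := mul_le_mul_of_nonneg_left har hpos.le
              nlinarith
          _ ≤ (Real.sqrt 6 / Real.sqrt 5) * u * (Real.sqrt 5 / 2) := by
              have h1 : a * u ≤ (Real.sqrt 6 / Real.sqrt 5) * u :=
                mul_le_mul_of_nonneg_right ha hupos.le
              have h2' : 0 < Real.sqrt 6 / Real.sqrt 5 * u := by positivity
              nlinarith
          _ = Real.sqrt 6 / 2 * u := by
              field_simp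
    -- now conclude
    have hE : 0 < Real.exp (a * t) := Real.exp_pos _
    have hexp2u : Real.exp (-Real.sqrt 6 * t / 2) = 2 * u := by rw [hu]; ring
    rw [hexp2u]
    have hineq : a * Real.arsinh u ≤ Real.sqrt 6 / 2 * u * s⁻¹ := by
      rw [← div_eq_mul_inv, le_div_iff₀ hspos]; exact key
    have key2 : a * Real.arsinh u - Real.sqrt 6 / 2 * u * s⁻¹ ≤ 0 := sub_nonpos.mpr hineq
    calc Real.sqrt 2 * (s⁻¹ * (2 * u * (-Real.sqrt 6 / 2) / 2)) * Real.exp (a * t)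
          + Real.sqrt 2 * Real.arsinh u * (Real.exp (a * t) * a)
        = Real.sqrt 2 * Real.exp (a * t)
            * (a * Real.arsinh u - Real.sqrt 6 / 2 * u * s⁻¹) := by ring
      _ ≤ 0 := mul_nonpos_of_nonneg_of_nonpos (by positivity) key2
end

section
/- Let Λ be a rank-2 lattice in a real inner product space, and let b1, b2 be a reduced basis of Λ, i.e., ‖b1‖ ≤ ‖v‖ for all nonzero v ∈ Λ and ‖b2‖ ≤ ‖v‖ for all v ∈ Λ \ ℤb1. Then ‖b1‖·‖b2‖ ≤ (2/√3) · Vol(Λ), where Vol(Λ) is the area of a fundamental parallelepiped. -/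
open RealInnerProductSpace

/-- If `b1, b2` is a reduced basis of the rank-2 lattice `Λ = ℤb1 + ℤb2` in a real inner
product space, then `‖b1‖·‖b2‖ ≤ (2/√3)·Vol(Λ)`, where `Vol(Λ)` is the area of a
fundamental parallelepiped, `√(‖b1‖²‖b2‖² - ⟪b1,b2⟫²)`. -/
theorem reduced_basis_volume {E : Type*} [NormedAddCommGroup E]
    [InnerProductSpace ℝ E] (b1 b2 : E)
    (hind : LinearIndependent ℝ ![b1, b2])
    (h1 : ∀ v ∈ Submodule.span ℤ ({b1, b2} : Set E), v ≠ 0 → ‖b1‖ ≤ ‖v‖)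
    (h2 : ∀ v ∈ Submodule.span ℤ ({b1, b2} : Set E), (∀ n : ℤ, v ≠ n • b1) →
        ‖b2‖ ≤ ‖v‖) :
    ‖b1‖ * ‖b2‖ ≤ (2 / Real.sqrt 3) *
      Real.sqrt (‖b1‖ ^ 2 * ‖b2‖ ^ 2 - ⟪b1, b2⟫ ^ 2) := by
  have hpair := LinearIndependent.pair_iff.mp hind
  have hb2 : b2 ≠ 0 := by
    intro h
    have := (hpair 0 1 (by simp [h])).2
    norm_num at this
  have hmem1 : b1 ∈ Submodule.span ℤ ({b1, b2} : Set E) :=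
    Submodule.subset_span (by simp)
  have hmem2 : b2 ∈ Submodule.span ℤ ({b1, b2} : Set E) :=
    Submodule.subset_span (by simp)
  have h12 : ‖b1‖ ≤ ‖b2‖ := h1 b2 hmem2 hb2
  have hnot : ∀ (c : ℤ), (∀ n : ℤ, b2 + c • b1 ≠ n • b1) := by
    intro c n h
    have hb : b2 = ((n - c : ℤ) : ℝ) • b1 := by
      rw [Int.cast_smul_eq_zsmul, sub_zsmul]
      rw [← sub_eq_add_neg]; exact eq_sub_of_add_eq h
    have := (hpair ((n - c : ℤ) : ℝ) (-1)
      (by rw [neg_one_smul, hb, add_neg_cancel])).2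
    norm_num at this
  have key : ∀ (c : ℤ), ‖b2‖ ≤ ‖b2 + c • b1‖ := fun c =>
    h2 _ (Submodule.add_mem _ hmem2 (Submodule.smul_mem _ c hmem1)) (hnot c)
  have e1 : ‖b2‖ ≤ ‖b2 + b1‖ := by simpa using key 1
  have e2 : ‖b2‖ ≤ ‖b2 - b1‖ := by
    have := key (-1); simpa [sub_eq_add_neg] using this
  have sq1 : ‖b2‖ ^ 2 ≤ ‖b2 + b1‖ ^ 2 := pow_le_pow_left₀ (norm_nonneg _) e1 2
  have sq2 : ‖b2‖ ^ 2 ≤ ‖b2 - b1‖ ^ 2 := pow_le_pow_left₀ (norm_nonneg _) e2 2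
  rw [norm_add_sq_real] at sq1
  rw [norm_sub_sq_real] at sq2
  rw [real_inner_comm b1 b2] at sq1 sq2
  have hprod : 0 ≤ (‖b1‖ ^ 2 - 2 * ⟪b1, b2⟫) * (‖b1‖ ^ 2 + 2 * ⟪b1, b2⟫) :=
    mul_nonneg (by linarith) (by linarith)
  have hab : ‖b1‖ ^ 2 ≤ ‖b2‖ ^ 2 := pow_le_pow_left₀ (norm_nonneg _) h12 2
  have ht : ⟪b1, b2⟫ ^ 2 ≤ ‖b1‖ ^ 2 * ‖b2‖ ^ 2 / 4 := by
    nlinarith [hprod, hab, sq_nonneg ‖b1‖, sq_nonneg ‖b2‖]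
  have h34 : (Real.sqrt 3 / 2 * (‖b1‖ * ‖b2‖)) ^ 2 ≤
      ‖b1‖ ^ 2 * ‖b2‖ ^ 2 - ⟪b1, b2⟫ ^ 2 := by
    have h3 : Real.sqrt 3 ^ 2 = 3 := Real.sq_sqrt (by norm_num)
    nlinarith [norm_nonneg b1, norm_nonneg b2]
  have hle : Real.sqrt 3 / 2 * (‖b1‖ * ‖b2‖) ≤
      Real.sqrt (‖b1‖ ^ 2 * ‖b2‖ ^ 2 - ⟪b1, b2⟫ ^ 2) := by
    have hy : (0:ℝ) ≤ ‖b1‖ ^ 2 * ‖b2‖ ^ 2 - ⟪b1, b2⟫ ^ 2 := by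
      nlinarith [sq_nonneg ‖b1‖, sq_nonneg ‖b2‖]
    exact Real.le_sqrt_of_sq_le h34
  have s3 : (0 : ℝ) < Real.sqrt 3 := Real.sqrt_pos.mpr (by norm_num)
  calc ‖b1‖ * ‖b2‖ = (2 / Real.sqrt 3) * (Real.sqrt 3 / 2 * (‖b1‖ * ‖b2‖)) := by
        field_simp
    _ ≤ _ := by
        apply mul_le_mul_of_nonneg_left hle (by positivity)
end
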